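/- arXiv:1208.5132 — 6 statements merged into one kernel-verified Lean document; each statement's English description precedes it below -/
import Mathlib

section
/- In an ontological model reproducing the Born rule, if ψ and φ are orthogonal states that both occur in some common measurement basis M, then Λ_ψ ∩ Λ_φ has measure zero. -/
open MeasureTheory

/-- In an ontological model reproducing the Born rule, if `ψ` and `φ` are
orthogonal states (`Q φ ψ = 0` and `Q ψ φ = 0`, where `Q α β = |⟨α|β⟩|²`) that both occur
in a common measurement basis `M`, then `Λ_ψ ∩ Λ_φ` has `ν`-measure zero. -/
theorem orthogonal_supports_null
    {Λ State Basis : Type*} [MeasurableSpace Λ] (ν : Measure Λ)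
    (P : Set State) (Ms : Set Basis) (memB : State → Basis → Prop)
    (μ : State → Λ → ℝ) (ξ : Basis → State → Λ → ℝ)
    (Q : State → State → ℝ)
    (hμnonneg : ∀ ψ ∈ P, ∀ l, 0 ≤ μ ψ l)
    (hμprob : ∀ ψ ∈ P, ∫ l, μ ψ l ∂ν = 1)
    (hμmeas : ∀ ψ ∈ P, Measurable (μ ψ))
    (hξnonneg : ∀ M ∈ Ms, ∀ α, memB α M → ∀ l, 0 ≤ ξ M α l)
    (hξle : ∀ M ∈ Ms, ∀ α, memB α M → ∀ l, ξ M α l ≤ 1)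
    (hξmeas : ∀ M ∈ Ms, ∀ α, memB α M → Measurable (ξ M α))
    (born : ∀ ψ ∈ P, ∀ M ∈ Ms, ∀ α, memB α M →
      ∫ l, ξ M α l * μ ψ l ∂ν = Q α ψ)
    (hQself : ∀ ψ ∈ P, Q ψ ψ = 1)
    (ψ φ : State) (hψ : ψ ∈ P) (hφ : φ ∈ P)
    (M : Basis) (hM : M ∈ Ms) (hmemψ : memB ψ M) (hmemφ : memB φ M)
    -- orthogonality: `|⟨φ|ψ⟩|² = 0`
    (horth : Q φ ψ = 0) (horth' : Q ψ φ = 0) :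
    ν {l | 0 < μ ψ l ∧ 0 < μ φ l} = 0 := by
  have hξψ0 := hξnonneg M hM ψ hmemψ
  have hξψ1 := hξle M hM ψ hmemψ
  have hξψm := hξmeas M hM ψ hmemψ
  -- μ ψ and μ φ are integrable (their integrals are 1 ≠ 0)
  have hintψ : Integrable (μ ψ) ν := by
    by_contra h
    exact one_ne_zero ((hμprob ψ hψ).symm.trans (integral_undef h))
  have hintφ : Integrable (μ φ) ν := by
    by_contra h
    exact one_ne_zero ((hμprob φ hφ).symm.trans (integral_undef h))
  -- ξ M ψ * μ φ is integrable
  have hintξφ : Integrable (fun l => ξ M ψ l * μ φ l) ν := by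
    refine hintφ.mono' ((hξψm.mul (hμmeas φ hφ)).aestronglyMeasurable) ?_
    filter_upwards with l
    rw [Real.norm_eq_abs, abs_of_nonneg (mul_nonneg (hξψ0 l) (hμnonneg φ hφ l))]
    calc ξ M ψ l * μ φ l ≤ 1 * μ φ l :=
          mul_le_mul_of_nonneg_right (hξψ1 l) (hμnonneg φ hφ l)
      _ = μ φ l := one_mul _
  have hintξψ : Integrable (fun l => ξ M ψ l * μ ψ l) ν := by
    refine hintψ.mono' ((hξψm.mul (hμmeas ψ hψ)).aestronglyMeasurable) ?_
    filter_upwards with l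
    rw [Real.norm_eq_abs, abs_of_nonneg (mul_nonneg (hξψ0 l) (hμnonneg ψ hψ l))]
    calc ξ M ψ l * μ ψ l ≤ 1 * μ ψ l :=
          mul_le_mul_of_nonneg_right (hξψ1 l) (hμnonneg ψ hψ l)
      _ = μ ψ l := one_mul _
  -- From Born with Q ψ φ = 0 : ξ M ψ * μ φ = 0 a.e.
  have h1 : ∀ᵐ l ∂ν, ξ M ψ l * μ φ l = 0 := by
    have := (integral_eq_zero_iff_of_nonneg
      (fun l => mul_nonneg (hξψ0 l) (hμnonneg φ hφ l)) hintξφ).mp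
      (by rw [born φ hφ M hM ψ hmemψ]; exact horth')
    filter_upwards [this] with l hl using hl
  -- From Born with Q ψ ψ = 1 : (1 - ξ M ψ) * μ ψ = 0 a.e.
  have h2 : ∀ᵐ l ∂ν, (1 - ξ M ψ l) * μ ψ l = 0 := by
    have hint : Integrable (fun l => (1 - ξ M ψ l) * μ ψ l) ν := by
      have : (fun l => (1 - ξ M ψ l) * μ ψ l)
          = fun l => μ ψ l - ξ M ψ l * μ ψ l := by
        funext l; ring
      rw [this]
      exact hintψ.sub hintξψ
    have hz : ∫ l, (1 - ξ M ψ l) * μ ψ l ∂ν = 0 := by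
      have : (fun l => (1 - ξ M ψ l) * μ ψ l)
          = fun l => μ ψ l - ξ M ψ l * μ ψ l := by
        funext l; ring
      rw [this, integral_sub hintψ hintξψ, hμprob ψ hψ,
        born ψ hψ M hM ψ hmemψ, hQself ψ hψ, sub_self]
    have := (integral_eq_zero_iff_of_nonneg
      (fun l => mul_nonneg (by linarith [hξψ1 l]) (hμnonneg ψ hψ l)) hint).mp hz
    filter_upwards [this] with l hl using hl
  -- combine: a.e. no point lies in the intersection of supports
  rw [measure_eq_zero_iff_ae_notMem]
  filter_upwards [h1, h2] with l hl1 hl2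
  intro ⟨hψl, hφl⟩
  have hx : ξ M ψ l = 0 := by
    rcases mul_eq_zero.mp hl1 with h | h
    · exact h
    · exact absurd h (ne_of_gt hφl)
  rcases mul_eq_zero.mp hl2 with h | h
  · rw [hx] at h; norm_num at h
  · exact absurd h (ne_of_gt hψl)
end

section
/- If an ontological model of M is not maximally ψ-epistemic, witnessed by states ψ, φ with ∫_{Λ_φ} μ_ψ dλ < |⟨φ|ψ⟩|², and if P contains states ψ⊥, φ⊥ orthogonal to ψ, φ respectively within the two-dimensional span of ψ and φ, then the model is preparation contextual: the mixtures μ₁ = ½(μ_ψ + μ_{ψ⊥}) and μ₂ = ½(μ_φ + μ_{φ⊥}), which correspond to the same density operator ½Π, are distinct (their supports differ by a set of positive measure). -/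
/-!
Let `Λ_φ = {μ_φ > 0}` and `ξ = ξ_M(φ|·)`. By the Born rule `∫ ξ μ_ψ = |⟨φ|ψ⟩|²`, while `ξ = 1`
a.e. on `Λ_φ`, so `∫_{Λ_φ} ξ μ_ψ = ∫_{Λ_φ} μ_ψ < |⟨φ|ψ⟩|²`: the function `ξ μ_ψ` has positive
mass outside `Λ_φ`. Wherever `ξ μ_ψ > 0` we have `ξ > 0`, and since `∫ ξ μ_{φ⊥} = |⟨φ|φ⊥⟩|² = 0`, `μ_{φ⊥}` vanishes
a.e. there as well. Hence the support of `½(μ_ψ + μ_{ψ⊥})` exceeds that of `½(μ_φ + μ_{φ⊥})` on a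
set of positive measure, and in particular the two mixtures differ.
-/

open MeasureTheory Function

section

variable {Λ : Type*} [MeasurableSpace Λ] {ν : Measure Λ}

theorem measure_support_inter_compl_pos_of_setIntegral_lt_integral {g : Λ → ℝ} {s : Set Λ}
    (hs : MeasurableSet s) (hg0 : 0 ≤ g) (hg : Integrable g ν)
    (hlt : ∫ l in s, g l ∂ν < ∫ l, g l ∂ν) :
    0 < ν (support g ∩ sᶜ) := by
  rw [← setIntegral_pos_iff_support_of_nonneg_ae (Filter.Eventually.of_forall hg0) hg.integrableOn]
  linarith [integral_add_compl hs hg]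

theorem measure_setOf_pos_diff_eq_zero_of_ae_eq {f g : Λ → ℝ} (h : f =ᵐ[ν] g) :
    ν ({l | 0 < f l} \ {l | 0 < g l}) = 0 := by
  refine measure_mono_null ?_ (ae_iff.mp h)
  rintro l ⟨hf, hg⟩ hfg
  exact hg (show 0 < g l from hfg ▸ hf)

end

theorem support_mul_inter_compl_subset_diff_union {Λ : Type*} {ξ a a' b b' : Λ → ℝ}
    (hξ : 0 ≤ ξ) (ha : 0 ≤ a) (ha' : 0 ≤ a') :
    support (ξ * a) ∩ {l | 0 < b l}ᶜ ⊆
      ({l | 0 < (a l + a' l) / 2} \ {l | 0 < (b l + b' l) / 2}) ∪ support (ξ * b') := by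
  rintro l ⟨hξa, hb⟩
  simp only [mem_support, Pi.mul_apply, Set.mem_compl_iff, Set.mem_ofPred_eq, not_lt] at hξa hb
  have hξpos : 0 < ξ l := (hξ l).lt_of_ne (left_ne_zero_of_mul hξa).symm
  have hapos : 0 < a l := (ha l).lt_of_ne (right_ne_zero_of_mul hξa).symm
  by_cases hbb' : 0 < (b l + b' l) / 2
  · right
    have hb'pos : 0 < b' l := by linarith
    exact (mul_pos hξpos hb'pos).ne'
  · left
    exact ⟨show 0 < (a l + a' l) / 2 by linarith [show (0 : ℝ) ≤ a' l from ha' l], hbb'⟩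

theorem not_maximally_epistemic_preparation_contextual_general
    {Λ State Basis : Type*} [MeasurableSpace Λ] (ν : Measure Λ)
    (P : Set State) (Ms : Set Basis) (memB : State → Basis → Prop)
    (μ : State → Λ → ℝ) (ξ : Basis → State → Λ → ℝ)
    (Q : State → State → ℝ)
    (hμnonneg : ∀ ψ ∈ P, ∀ l, 0 ≤ μ ψ l)
    (hμprob : ∀ ψ ∈ P, ∫ l, μ ψ l ∂ν = 1)
    (hμmeas : ∀ ψ ∈ P, Measurable (μ ψ))
    (hξnonneg : ∀ M ∈ Ms, ∀ α, memB α M → ∀ l, 0 ≤ ξ M α l)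
    (hξle : ∀ M ∈ Ms, ∀ α, memB α M → ∀ l, ξ M α l ≤ 1)
    (hξmeas : ∀ M ∈ Ms, ∀ α, memB α M → Measurable (ξ M α))
    (born : ∀ ψ ∈ P, ∀ M ∈ Ms, ∀ α, memB α M →
      ∫ l, ξ M α l * μ ψ l ∂ν = Q α ψ)
    (hξone : ∀ M ∈ Ms, ∀ φ, memB φ M → ∀ᵐ l ∂ν, 0 < μ φ l → ξ M φ l = 1)
    (ψ φ ψp φp : State) (hψ : ψ ∈ P) (hφ : φ ∈ P) (hψp : ψp ∈ P) (hφp : φp ∈ P)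
    -- a basis containing both `φ` and `φ⊥`
    (M : Basis) (hM : M ∈ Ms) (hmemφ : memB φ M)
    -- orthogonality within the 2D span: `|⟨ψ⊥|ψ⟩|² = 0 = |⟨φ⊥|φ⟩|²`
    (horthφ' : Q φ φp = 0)
    -- not maximally ψ-epistemic at `(ψ, φ)`
    (hlt : ∫ l in {l | 0 < μ φ l}, μ ψ l ∂ν < Q φ ψ) :
    ¬ ((fun l => (μ ψ l + μ ψp l) / 2) =ᵐ[ν] fun l => (μ φ l + μ φp l) / 2) ∧
    0 < ν ({l | 0 < (μ ψ l + μ ψp l) / 2} \ {l | 0 < (μ φ l + μ φp l) / 2}) := by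
  have hξφ0 := hξnonneg M hM φ hmemφ
  have hint : ∀ α ∈ P, Integrable (ξ M φ * μ α) ν := fun α hα =>
    (Integrable.of_integral_ne_zero (by simp [hμprob α hα])).bdd_mul
      (hξmeas M hM φ hmemφ).aestronglyMeasurable
      (Filter.Eventually.of_forall fun l => by
        simpa [abs_of_nonneg (hξφ0 l)] using hξle M hM φ hmemφ l)
  have hs : MeasurableSet {l | 0 < μ φ l} := measurableSet_lt measurable_const (hμmeas φ hφ)
  have hφp_null : ν (support (ξ M φ * μ φp)) = 0 := by
    have hzero := born φp hφp M hM φ hmemφ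
    rw [horthφ'] at hzero
    exact ae_iff.mp ((integral_eq_zero_iff_of_nonneg
      (fun l => mul_nonneg (hξφ0 l) (hμnonneg φp hφp l)) (hint φp hφp)).mp hzero)
  have hout : 0 < ν (support (ξ M φ * μ ψ) ∩ {l | 0 < μ φ l}ᶜ) := by
    refine measure_support_inter_compl_pos_of_setIntegral_lt_integral hs
      (fun l => mul_nonneg (hξφ0 l) (hμnonneg ψ hψ l)) (hint ψ hψ) ?_
    calc ∫ l in {l | 0 < μ φ l}, (ξ M φ * μ ψ) l ∂ν = ∫ l in {l | 0 < μ φ l}, μ ψ l ∂ν := by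
          refine setIntegral_congr_ae hs ?_
          filter_upwards [hξone M hM φ hmemφ] with l hl hlφ
          simp [hl hlφ]
      _ < Q φ ψ := hlt
      _ = ∫ l, (ξ M φ * μ ψ) l ∂ν := (born ψ hψ M hM φ hmemφ).symm
  have hpos : 0 < ν ({l | 0 < (μ ψ l + μ ψp l) / 2} \ {l | 0 < (μ φ l + μ φp l) / 2}) := by
    refine hout.trans_le ((measure_mono (support_mul_inter_compl_subset_diff_union (b' := μ φp)
      hξφ0 (hμnonneg ψ hψ) (hμnonneg ψp hψp))).trans ((measure_union_le _ _).trans ?_))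
    rw [hφp_null, add_zero]
  exact ⟨fun h => hpos.ne' (measure_setOf_pos_diff_eq_zero_of_ae_eq h), hpos⟩

/-- If an ontological model of `Ms` is not maximally ψ-epistemic, witnessed by
`ψ, φ ∈ P` with `∫_{Λ_φ} μ_ψ < |⟨φ|ψ⟩|²`, and if `P` contains states `ψ⊥, φ⊥` orthogonal
to `ψ, φ` respectively within the 2D span of `ψ` and `φ` (so that the two 50/50 ensembles
have the same density operator `½Π`), then the model is preparation contextual: the mixed
distributions `½(μ_ψ + μ_{ψ⊥})` and `½(μ_φ + μ_{φ⊥})` are not equal `ν`-a.e.; indeed their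
supports differ by a set of positive measure. -/
theorem not_maximally_epistemic_preparation_contextual
    {Λ State Basis : Type*} [MeasurableSpace Λ] (ν : Measure Λ)
    (P : Set State) (Ms : Set Basis) (memB : State → Basis → Prop)
    (μ : State → Λ → ℝ) (ξ : Basis → State → Λ → ℝ)
    (Q : State → State → ℝ)
    (hμnonneg : ∀ ψ ∈ P, ∀ l, 0 ≤ μ ψ l)
    (hμprob : ∀ ψ ∈ P, ∫ l, μ ψ l ∂ν = 1)
    (hμmeas : ∀ ψ ∈ P, Measurable (μ ψ))
    (hξnonneg : ∀ M ∈ Ms, ∀ α, memB α M → ∀ l, 0 ≤ ξ M α l)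
    (hξle : ∀ M ∈ Ms, ∀ α, memB α M → ∀ l, ξ M α l ≤ 1)
    (hξmeas : ∀ M ∈ Ms, ∀ α, memB α M → Measurable (ξ M α))
    (born : ∀ ψ ∈ P, ∀ M ∈ Ms, ∀ α, memB α M →
      ∫ l, ξ M α l * μ ψ l ∂ν = Q α ψ)
    (hξone : ∀ M ∈ Ms, ∀ φ, memB φ M → ∀ᵐ l ∂ν, 0 < μ φ l → ξ M φ l = 1)
    (ψ φ ψp φp : State) (hψ : ψ ∈ P) (hφ : φ ∈ P) (hψp : ψp ∈ P) (hφp : φp ∈ P)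
    -- a basis containing both `φ` and `φ⊥`
    (M : Basis) (hM : M ∈ Ms) (hmemφ : memB φ M) (hmemφp : memB φp M)
    -- orthogonality within the 2D span: `|⟨ψ⊥|ψ⟩|² = 0 = |⟨φ⊥|φ⟩|²`
    (horthψ : Q ψp ψ = 0) (horthφ : Q φp φ = 0) (horthφ' : Q φ φp = 0)
    -- not maximally ψ-epistemic at `(ψ, φ)`
    (hlt : ∫ l in {l | 0 < μ φ l}, μ ψ l ∂ν < Q φ ψ) :
    ¬ ((fun l => (μ ψ l + μ ψp l) / 2) =ᵐ[ν] fun l => (μ φ l + μ φp l) / 2) ∧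
    0 < ν ({l | 0 < (μ ψ l + μ ψp l) / 2} \ {l | 0 < (μ φ l + μ φp l) / 2}) :=
  not_maximally_epistemic_preparation_contextual_general ν P Ms memB μ ξ Q hμnonneg hμprob hμmeas
    hξnonneg hξle hξmeas born hξone ψ φ ψp φp hψ hφ hψp hφp M hM hmemφ horthφ' hlt
end

section
/- The Kochen-Specker qubit model is preparation contextual: the distributions ½(μ_{+z} + μ_{-z}) and ½(μ_{+x} + μ_{-x}) on S², both representing the maximally mixed state, are not equal; in particular the first vanishes on the equator {λ : λ_z = 0} while the second is strictly positive there (except at two points). -/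
/-! Mixing the preparations `ψ` and `-ψ` with equal weights yields the density
`|⟪ψ, λ⟫| / (2π)`. For `ψ = ±z` it is `|λ_z| / (2π)`, which vanishes on the equator, while for
`ψ = ±x` it is `|λ_x| / (2π)`, positive on the equator away from `λ = ±y`. Evaluating both at
`λ = x` separates them. -/

open MeasureTheory Metric
open scoped RealInnerProductSpace

/-- The Heaviside step function: `Θ x = 1` for `x > 0` and `0` for `x ≤ 0`. -/
noncomputable def heaviside (x : ℝ) : ℝ := if 0 < x then 1 else 0

/-- The Kochen-Specker density on the Bloch sphere for Bloch vector `ψ`: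
`μ_ψ(λ) = (1/π) Θ(ψ·λ) (ψ·λ)`. -/
noncomputable def ksDensity (ψ : EuclideanSpace ℝ (Fin 3))
    (l : sphere (0 : EuclideanSpace ℝ (Fin 3)) 1) : ℝ :=
  (1 / Real.pi) * heaviside ⟪ψ, (l : EuclideanSpace ℝ (Fin 3))⟫ *
    ⟪ψ, (l : EuclideanSpace ℝ (Fin 3))⟫

lemma heaviside_mul_self_add_heaviside_neg_mul_neg (x : ℝ) :
    heaviside x * x + heaviside (-x) * -x = |x| := by
  rcases lt_trichotomy x 0 with hx | rfl | hx
  · simp [heaviside, abs_of_neg hx, hx.not_gt, hx]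
  · simp [heaviside]
  · simp [heaviside, abs_of_pos hx, hx, hx.le]

lemma ksDensity_add_ksDensity_neg (ψ : EuclideanSpace ℝ (Fin 3))
    (l : sphere (0 : EuclideanSpace ℝ (Fin 3)) 1) :
    ksDensity ψ l + ksDensity (-ψ) l = |⟪ψ, (l : EuclideanSpace ℝ (Fin 3))⟫| / Real.pi := by
  rw [← heaviside_mul_self_add_heaviside_neg_mul_neg]
  simp only [ksDensity, inner_neg_left]
  ring

lemma ksDensity_mixture_single (i : Fin 3) (l : sphere (0 : EuclideanSpace ℝ (Fin 3)) 1) :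
    (ksDensity (EuclideanSpace.single i 1) l + ksDensity (-EuclideanSpace.single i 1) l) / 2 =
      |(l : EuclideanSpace ℝ (Fin 3)) i| / (2 * Real.pi) := by
  rw [ksDensity_add_ksDensity_neg, EuclideanSpace.inner_single_left, map_one, one_mul,
    div_div, mul_comm]

/-- The Kochen-Specker qubit model is preparation contextual: with the Bloch
vectors `±z = (0,0,±1)` and `±x = (±1,0,0)`, the distributions `½(μ₊z + μ₋z)` and
`½(μ₊x + μ₋x)`, both representing the maximally mixed state `I/2`, are not equal; in
particular the first vanishes on the equator `{λ : λ_z = 0}` while the second is strictly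
positive there except at the two points with `λ_x = 0`. -/
theorem kochenSpecker_preparation_contextual :
    (fun l : sphere (0 : EuclideanSpace ℝ (Fin 3)) 1 =>
        (ksDensity (EuclideanSpace.single 2 (1 : ℝ)) l +
          ksDensity (-(EuclideanSpace.single 2 (1 : ℝ))) l) / 2) ≠
      (fun l : sphere (0 : EuclideanSpace ℝ (Fin 3)) 1 =>
        (ksDensity (EuclideanSpace.single 0 (1 : ℝ)) l +
          ksDensity (-(EuclideanSpace.single 0 (1 : ℝ))) l) / 2) ∧
    ∀ l : sphere (0 : EuclideanSpace ℝ (Fin 3)) 1,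
      (l : EuclideanSpace ℝ (Fin 3)) 2 = 0 →
        (ksDensity (EuclideanSpace.single 2 (1 : ℝ)) l +
            ksDensity (-(EuclideanSpace.single 2 (1 : ℝ))) l) / 2 = 0 ∧
        ((l : EuclideanSpace ℝ (Fin 3)) 0 ≠ 0 →
          0 < (ksDensity (EuclideanSpace.single 0 (1 : ℝ)) l +
              ksDensity (-(EuclideanSpace.single 0 (1 : ℝ))) l) / 2) := by
  simp only [ksDensity_mixture_single]
  have equator (l : sphere (0 : EuclideanSpace ℝ (Fin 3)) 1)
      (hz : (l : EuclideanSpace ℝ (Fin 3)) 2 = 0) :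
      |(l : EuclideanSpace ℝ (Fin 3)) 2| / (2 * Real.pi) = 0 ∧
        ((l : EuclideanSpace ℝ (Fin 3)) 0 ≠ 0 →
          0 < |(l : EuclideanSpace ℝ (Fin 3)) 0| / (2 * Real.pi)) :=
    ⟨by simp [hz], fun hx => by positivity⟩
  refine ⟨fun h => ?_, equator⟩
  set e₀ : sphere (0 : EuclideanSpace ℝ (Fin 3)) 1 := ⟨EuclideanSpace.single 0 1, by simp⟩
  obtain ⟨hz, hx⟩ := equator e₀ (by simp [e₀])
  exact (hx (by simp [e₀])).ne' (congrFun h e₀ ▸ hz)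
end

section
/- The Bell-Mermin model reproduces the Born rule: for Bloch vectors ψ, α, ∫_{S²} Θ(α·(ψ + λ₂)) (1/(4π)) dλ₂ = (1 + α·ψ)/2. -/
open MeasureTheory Metric
open scoped RealInnerProductSpace

/-!
`Measure.toSphere` assigns to a set of directions three times the volume of the cone it spans in
the unit ball, so the cap `{l | c < ⟪α, l⟫}` has measure `3 vol {x | ‖x‖ < 1 ∧ c ‖x‖ < ⟪α, x⟫}`.
Writing `x = t α + y` with `y ⟂ α`, each slice of this cone at fixed `t` is a disc or an annulus
in the plane `α^⟂`, of area `π (1 - t²)`, `π (1 - t² / c²)` or their difference, and integrating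
over `t` gives `2π/3 · (1 - c)`: the cap has area `2π (1 - c)`, proportional to its height
(Archimedes). With `c = -⟪α, ψ⟫` the Heaviside integrand is the indicator of such a cap, so the
integral is `2π (1 + ⟪α, ψ⟫) / (4π)`.
-/

open Set Real
open scoped ENNReal Pointwise

theorem integral_heaviside_comp {X : Type*} [MeasurableSpace X] (μ : Measure X) {f : X → ℝ}
    (hf : Measurable f) : ∫ x, heaviside (f x) ∂μ = μ.real {x | 0 < f x} := by
  have : (fun x => heaviside (f x)) = {x | 0 < f x}.indicator 1 := by
    ext x
    simp [heaviside, Set.indicator]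
  rw [this, integral_indicator_one (measurableSet_lt measurable_const hf)]

section ConeSlice

variable (F : Type*) [NormedAddCommGroup F]

/-- The slice at height `t = ⟪α, x⟫` of the cone `{x | ‖x‖ < 1 ∧ c ‖x‖ < ⟪α, x⟫}`, written in
the component `y ⟂ α` of `x`, so that `‖x‖ = √(t² + ‖y‖²)`. -/
def coneSlice (c t : ℝ) : Set F := {y | √(t ^ 2 + ‖y‖ ^ 2) < 1 ∧ c * √(t ^ 2 + ‖y‖ ^ 2) < t}

variable {F} {c t : ℝ}

theorem coneSlice_of_pos_of_nonpos (ht : 0 < t) (hc : c ≤ 0) :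
    coneSlice F c t = {y | ‖y‖ ^ 2 < 1 - t ^ 2} := by
  ext y
  have : c * √(t ^ 2 + ‖y‖ ^ 2) < t :=
    (mul_nonpos_of_nonpos_of_nonneg hc (sqrt_nonneg _)).trans_lt ht
  simp only [coneSlice, mem_ofPred_eq, sqrt_lt' one_pos, this, and_true]
  constructor <;> intro h <;> linarith

theorem coneSlice_of_pos_of_pos (ht : 0 < t) (hc : 0 < c) :
    coneSlice F c t = {y | ‖y‖ ^ 2 < min (1 - t ^ 2) (t ^ 2 / c ^ 2 - t ^ 2)} := by
  have key : ∀ X, c * √X < t ↔ X < t ^ 2 / c ^ 2 := fun X => by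
    rw [mul_comm, ← lt_div_iff₀ hc, sqrt_lt' (div_pos ht hc), div_pow]
  ext y
  simp only [coneSlice, mem_ofPred_eq, sqrt_lt' one_pos, key, lt_min_iff]
  constructor <;> rintro ⟨h₁, h₂⟩ <;> constructor <;> linarith

theorem coneSlice_of_neg_of_neg (ht : t < 0) (hc : c < 0) :
    coneSlice F c t = {y | t ^ 2 / c ^ 2 - t ^ 2 < ‖y‖ ^ 2 ∧ ‖y‖ ^ 2 < 1 - t ^ 2} := by
  have key : ∀ X, c * √X < t ↔ t ^ 2 / c ^ 2 < X := fun X => by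
    rw [mul_comm, ← div_lt_iff_of_neg hc, lt_sqrt (div_nonneg_of_nonpos ht.le hc.le), div_pow]
  ext y
  simp only [coneSlice, mem_ofPred_eq, sqrt_lt' one_pos, key]
  constructor <;> rintro ⟨h₁, h₂⟩ <;> constructor <;> linarith

theorem coneSlice_of_neg_of_nonneg (ht : t < 0) (hc : 0 ≤ c) : coneSlice F c t = ∅ := by
  ext y
  have : ¬ c * √(t ^ 2 + ‖y‖ ^ 2) < t :=
    not_lt.mpr (ht.le.trans (mul_nonneg hc (sqrt_nonneg _)))
  simp [coneSlice, this]

end ConeSlice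

section Plane

variable {F : Type*} [NormedAddCommGroup F] [InnerProductSpace ℝ F] [FiniteDimensional ℝ F]
  [MeasurableSpace F] [BorelSpace F]

theorem volume_setOf_norm_sq_lt (hF : Module.finrank ℝ F = 2) (b : ℝ) :
    volume {y : F | ‖y‖ ^ 2 < b} = ENNReal.ofReal (π * b) := by
  rcases le_or_gt b 0 with hb | hb
  · have : {y : F | ‖y‖ ^ 2 < b} = ∅ := by
      ext y
      simpa using hb.trans (sq_nonneg ‖y‖)
    rw [this, measure_empty,
      ENNReal.ofReal_of_nonpos (mul_nonpos_of_nonneg_of_nonpos pi_nonneg hb)]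
  · have : Nontrivial F := Module.nontrivial_of_finrank_eq_succ hF
    have hball : {y : F | ‖y‖ ^ 2 < b} = ball 0 √b := by
      ext y
      simp [lt_sqrt (norm_nonneg y)]
    rw [hball, InnerProductSpace.volume_ball_of_dim_even (k := 1) hF, hF,
      ← ENNReal.ofReal_pow (sqrt_nonneg b), sq_sqrt hb.le, ← ENNReal.ofReal_mul hb.le]
    norm_num [mul_comm]

theorem volume_setOf_lt_norm_sq_lt (hF : Module.finrank ℝ F = 2) {a : ℝ} (ha : 0 ≤ a) (b : ℝ) :
    volume {y : F | a < ‖y‖ ^ 2 ∧ ‖y‖ ^ 2 < b} = ENNReal.ofReal (π * (b - a)) := by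
  rcases le_or_gt b a with hab | hab
  · have : {y : F | a < ‖y‖ ^ 2 ∧ ‖y‖ ^ 2 < b} = ∅ := by
      ext y
      simp only [mem_ofPred_eq, mem_empty_iff_false, iff_false, not_and, not_lt]
      intro h
      linarith
    rw [this, measure_empty,
      ENNReal.ofReal_of_nonpos (mul_nonpos_of_nonneg_of_nonpos pi_nonneg (by linarith))]
  · have : Nontrivial F := Module.nontrivial_of_finrank_eq_succ hF
    have hdiff : {y : F | a < ‖y‖ ^ 2 ∧ ‖y‖ ^ 2 < b} = {y | ‖y‖ ^ 2 < b} \ closedBall 0 √a := by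
      ext y
      simp [sqrt_lt ha (norm_nonneg y), and_comm]
    have hsub : closedBall (0 : F) √a ⊆ {y | ‖y‖ ^ 2 < b} := by
      intro y hy
      have : ‖y‖ ^ 2 ≤ a := by simpa [le_sqrt (norm_nonneg y) ha] using hy
      exact show ‖y‖ ^ 2 < b by linarith
    have hball : volume (closedBall (0 : F) √a) = ENNReal.ofReal (π * a) := by
      rw [InnerProductSpace.volume_closedBall_of_dim_even (k := 1) hF, hF,
        ← ENNReal.ofReal_pow (sqrt_nonneg a), sq_sqrt ha, ← ENNReal.ofReal_mul ha]
      norm_num [mul_comm]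
    rw [hdiff, measure_sdiff hsub measurableSet_closedBall.nullMeasurableSet
      (hball ▸ ENNReal.ofReal_ne_top), volume_setOf_norm_sq_lt hF, hball,
      ← ENNReal.ofReal_sub _ (by positivity), mul_sub]

end Plane

theorem setLIntegral_Ioi_ofReal_pi_mul_one_sub_sq_div {r : ℝ} (hr : 0 < r) :
    ∫⁻ t in Ioi 0, ENNReal.ofReal (π * (1 - t ^ 2 / r ^ 2)) = ENNReal.ofReal (2 * π * r / 3) := by
  have hvanish : ∀ t ∈ Ioi r, ENNReal.ofReal (π * (1 - t ^ 2 / r ^ 2)) = 0 := fun t ht => by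
    have : 1 ≤ t ^ 2 / r ^ 2 := by
      rw [one_le_div (by positivity)]
      nlinarith [mem_Ioi.mp ht]
    exact ENNReal.ofReal_of_nonpos (mul_nonpos_of_nonneg_of_nonpos pi_nonneg (by linarith))
  rw [← Ioc_union_Ioi_eq_Ioi hr.le, lintegral_union measurableSet_Ioi Ioc_disjoint_Ioi_same,
    setLIntegral_congr_fun measurableSet_Ioi hvanish, lintegral_zero, add_zero,
    ← ofReal_integral_eq_lintegral_ofReal, ← intervalIntegral.integral_of_le hr.le]
  · congr 1
    rw [intervalIntegral.integral_const_mul, intervalIntegral.integral_sub intervalIntegrable_const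
      (((continuous_pow 2).div_const _).intervalIntegrable _ _), intervalIntegral.integral_div,
      integral_pow, intervalIntegral.integral_const]
    field_simp
    ring
  · exact (by fun_prop : Continuous fun t : ℝ => π * (1 - t ^ 2 / r ^ 2)).integrableOn_Icc.mono_set
      Ioc_subset_Icc_self
  · refine ae_restrict_of_forall_mem measurableSet_Ioc fun t ht => ?_
    have : t ^ 2 / r ^ 2 ≤ 1 := by
      rw [div_le_one (by positivity)]
      nlinarith [ht.1, ht.2]
    exact mul_nonneg pi_nonneg (by linarith)

theorem setLIntegral_Iio_ofReal_pi_mul_one_sub_sq_div {r : ℝ} (hr : 0 < r) :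
    ∫⁻ t in Iio 0, ENNReal.ofReal (π * (1 - t ^ 2 / r ^ 2)) = ENNReal.ofReal (2 * π * r / 3) := by
  rw [← setLIntegral_Ioi_ofReal_pi_mul_one_sub_sq_div hr,
    ← (Measure.measurePreserving_neg (volume : Measure ℝ)).setLIntegral_comp_preimage_emb
      (Homeomorph.neg ℝ).measurableEmbedding]
  simp

section ConeSliceVolume

variable {F : Type*} [NormedAddCommGroup F] [InnerProductSpace ℝ F] [FiniteDimensional ℝ F]
  [MeasurableSpace F] [BorelSpace F]

theorem setLIntegral_Ioi_volume_coneSlice (hF : Module.finrank ℝ F = 2) {c : ℝ} (hc : |c| ≤ 1) :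
    ∫⁻ t in Ioi 0, volume (coneSlice F c t) = ENNReal.ofReal (2 * π / 3 * (1 - max c 0)) := by
  have hdisc := setLIntegral_Ioi_ofReal_pi_mul_one_sub_sq_div one_pos
  simp only [one_pow, div_one, mul_one] at hdisc
  rcases le_or_gt c 0 with hc0 | hc0
  · rw [setLIntegral_congr_fun measurableSet_Ioi fun t ht => by
      rw [coneSlice_of_pos_of_nonpos ht hc0, volume_setOf_norm_sq_lt hF], hdisc, max_eq_right hc0]
    ring_nf
  · have hc2 : c ^ 2 ≤ 1 := by nlinarith [abs_le.mp hc]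
    -- the slice is the disc `‖y‖² < 1 - t²` minus an annulus of area `π (1 - t² / c²)⁺`
    have hsplit : ∀ t ∈ Ioi (0 : ℝ),
        volume (coneSlice F c t) + ENNReal.ofReal (π * (1 - t ^ 2 / c ^ 2)) =
          ENNReal.ofReal (π * (1 - t ^ 2)) := fun t ht => by
      rw [coneSlice_of_pos_of_pos ht hc0, volume_setOf_norm_sq_lt hF]
      rcases le_or_gt (t ^ 2 / c ^ 2) 1 with h | h
      · have : t ^ 2 ≤ t ^ 2 / c ^ 2 := le_div_self (sq_nonneg t) (by positivity) hc2
        rw [min_eq_right (by linarith), ← ENNReal.ofReal_add (by nlinarith [pi_pos])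
          (by nlinarith [pi_pos])]
        ring_nf
      · rw [min_eq_left (by linarith), ENNReal.ofReal_of_nonpos (p := π * (1 - t ^ 2 / c ^ 2))
          (by nlinarith [pi_pos]), add_zero]
    have := setLIntegral_congr_fun (μ := volume) measurableSet_Ioi hsplit
    rw [lintegral_add_right _ (by fun_prop), setLIntegral_Ioi_ofReal_pi_mul_one_sub_sq_div hc0,
      hdisc] at this
    rw [ENNReal.eq_sub_of_add_eq ENNReal.ofReal_ne_top this,
      ← ENNReal.ofReal_sub _ (by positivity), max_eq_left hc0.le]
    ring_nf

theorem setLIntegral_Iio_volume_coneSlice (hF : Module.finrank ℝ F = 2) {c : ℝ} (hc : |c| ≤ 1) :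
    ∫⁻ t in Iio 0, volume (coneSlice F c t) = ENNReal.ofReal (2 * π / 3 * -min c 0) := by
  rcases le_or_gt 0 c with hc0 | hc0
  · rw [setLIntegral_congr_fun measurableSet_Iio fun t ht => by
      rw [coneSlice_of_neg_of_nonneg ht hc0, measure_empty], lintegral_zero, min_eq_right hc0]
    simp
  · have hc2 : c ^ 2 ≤ 1 := by nlinarith [abs_le.mp hc]
    have hc2pos : 0 < c ^ 2 := by nlinarith
    rw [setLIntegral_congr_fun (g := fun t => ENNReal.ofReal (π * (1 - t ^ 2 / (-c) ^ 2)))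
      measurableSet_Iio fun t ht => by
        rw [coneSlice_of_neg_of_neg ht hc0, volume_setOf_lt_norm_sq_lt hF
          (sub_nonneg.mpr (le_div_self (sq_nonneg t) hc2pos hc2)), neg_sq]
        ring_nf,
      setLIntegral_Iio_ofReal_pi_mul_one_sub_sq_div (neg_pos.mpr hc0), min_eq_left hc0.le]
    ring_nf

end ConeSliceVolume

section Slicing

variable {E : Type*} [NormedAddCommGroup E] [InnerProductSpace ℝ E]

noncomputable def orthogonalDecompositionOfUnit (α : E) (hα : ‖α‖ = 1) :
    E ≃ₗᵢ[ℝ] WithLp 2 (ℝ × (ℝ ∙ α)ᗮ) :=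
  (ℝ ∙ α).orthogonalDecomposition.trans
    (LinearIsometryEquiv.withLpProdCongr 2 (LinearIsometryEquiv.toSpanUnitSingleton α hα).symm
      (LinearIsometryEquiv.refl ℝ _))

theorem orthogonalDecompositionOfUnit_fst (α : E) (hα : ‖α‖ = 1) (x : E) :
    (orthogonalDecompositionOfUnit α hα x).ofLp.1 = ⟪α, x⟫ := by
  simp only [orthogonalDecompositionOfUnit, LinearIsometryEquiv.trans_apply,
    Submodule.orthogonalDecomposition_apply, LinearIsometryEquiv.withLpProdCongr_apply]
  change (LinearIsometryEquiv.toSpanUnitSingleton α hα).symm ((ℝ ∙ α).orthogonalProjectionOnto x) = _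
  rw [LinearIsometryEquiv.symm_apply_eq]
  ext
  simp [Submodule.starProjection_singleton, hα]

theorem norm_eq_sqrt_inner_sq_add_norm_sq (α : E) (hα : ‖α‖ = 1) (x : E) :
    ‖x‖ = √(⟪α, x⟫ ^ 2 + ‖(orthogonalDecompositionOfUnit α hα x).ofLp.2‖ ^ 2) := by
  conv_lhs => rw [← (orthogonalDecompositionOfUnit α hα).norm_map x,
    ← sqrt_sq (norm_nonneg _), WithLp.prod_norm_sq_eq_of_L2]
  rw [← orthogonalDecompositionOfUnit_fst α hα, Real.norm_eq_abs, sq_abs]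
  rfl

variable [FiniteDimensional ℝ E] [MeasurableSpace E] [BorelSpace E]

theorem volume_setOf_inner_norm_eq_lintegral (α : E) (hα : ‖α‖ = 1) {p : ℝ → ℝ → Prop}
    (hp : MeasurableSet {z : ℝ × ℝ | p z.1 z.2}) :
    volume {x : E | p ⟪α, x⟫ ‖x‖} =
      ∫⁻ t, volume {y : (ℝ ∙ α)ᗮ | p t √(t ^ 2 + ‖y‖ ^ 2)} := by
  set S : Set (ℝ × (ℝ ∙ α)ᗮ) := {q | p q.1 √(q.1 ^ 2 + ‖q.2‖ ^ 2)}
  have hS : MeasurableSet S :=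
    measurableSet_preimage (f := fun q : ℝ × (ℝ ∙ α)ᗮ => (q.1, √(q.1 ^ 2 + ‖q.2‖ ^ 2)))
      (by fun_prop) hp
  have hΨ : MeasurePreserving (fun x => (orthogonalDecompositionOfUnit α hα x).ofLp) :=
    (WithLp.volume_preserving_ofLp ℝ _).comp (orthogonalDecompositionOfUnit α hα).measurePreserving
  have hpre : {x : E | p ⟪α, x⟫ ‖x‖} =
      (fun x => (orthogonalDecompositionOfUnit α hα x).ofLp) ⁻¹' S := by
    ext x
    simp only [mem_ofPred_eq, mem_preimage, S]
    rw [norm_eq_sqrt_inner_sq_add_norm_sq α hα x, orthogonalDecompositionOfUnit_fst]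
  rw [hpre, hΨ.measure_preimage hS.nullMeasurableSet, Measure.volume_eq_prod,
    Measure.prod_apply hS]
  rfl

theorem volume_setOf_norm_lt_one_mul_norm_lt_inner (hE : Module.finrank ℝ E = 3) {α : E}
    (hα : ‖α‖ = 1) {c : ℝ} (hc : |c| ≤ 1) :
    volume {x : E | ‖x‖ < 1 ∧ c * ‖x‖ < ⟪α, x⟫} = ENNReal.ofReal (2 * π / 3 * (1 - c)) := by
  have hK : Module.finrank ℝ (ℝ ∙ α)ᗮ = 2 := Submodule.finrank_add_finrank_orthogonal' <| by
    rw [finrank_span_singleton (norm_ne_zero_iff.mp (hα ▸ one_ne_zero)), hE]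
  have hmeas : MeasurableSet {z : ℝ × ℝ | z.2 < 1 ∧ c * z.2 < z.1} :=
    (measurableSet_lt measurable_snd measurable_const).inter
      (measurableSet_lt (measurable_snd.const_mul c) measurable_fst)
  refine (volume_setOf_inner_norm_eq_lintegral α hα (p := fun t r => r < 1 ∧ c * r < t)
    hmeas).trans ?_
  change ∫⁻ t, volume (coneSlice _ c t) = _
  have hmax : max c 0 ≤ 1 := max_le (abs_le.mp hc).2 zero_le_one
  rw [← lintegral_add_compl _ measurableSet_Iio, compl_Iio, setLIntegral_congr Ioi_ae_eq_Ici.symm,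
    setLIntegral_Iio_volume_coneSlice hK hc, setLIntegral_Ioi_volume_coneSlice hK hc,
    ← ENNReal.ofReal_add (by nlinarith [pi_pos, min_le_right c 0]) (by nlinarith [pi_pos])]
  congr 1
  linear_combination (-(2 * π / 3)) * min_add_max c 0

end Slicing

section Sphere

variable {E : Type*} [NormedAddCommGroup E] [InnerProductSpace ℝ E]

theorem Ioo_smul_coe_setOf_lt_inner (α : E) (c : ℝ) :
    Ioo (0 : ℝ) 1 • ((↑) '' {l : sphere (0 : E) 1 | c < ⟪α, (l : E)⟫} : Set E) =
      {x : E | ‖x‖ < 1 ∧ c * ‖x‖ < ⟪α, x⟫} := by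
  ext x
  simp only [mem_smul, mem_image, mem_ofPred_eq]
  constructor
  · rintro ⟨r, ⟨hr0, hr1⟩, _, ⟨l, hl, rfl⟩, rfl⟩
    rw [norm_smul, norm_eq_of_mem_sphere l, Real.norm_of_nonneg hr0.le, mul_one,
      real_inner_smul_right]
    exact ⟨hr1, by rw [mul_comm r]; exact mul_lt_mul_of_pos_right hl hr0⟩
  · rintro ⟨h1, h2⟩
    have hx : 0 < ‖x‖ := norm_pos_iff.mpr fun h => by simp [h] at h2
    refine ⟨‖x‖, ⟨hx, h1⟩, _, ⟨⟨‖x‖⁻¹ • x, ?_⟩, ?_, rfl⟩, ?_⟩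
    · rw [mem_sphere_zero_iff_norm, norm_smul, norm_inv, norm_norm, inv_mul_cancel₀ hx.ne']
    · change c < ⟪α, ‖x‖⁻¹ • x⟫
      rwa [real_inner_smul_right, lt_inv_mul_iff₀ hx, mul_comm]
    · rw [smul_smul, mul_inv_cancel₀ hx.ne', one_smul]

variable [FiniteDimensional ℝ E] [MeasurableSpace E] [BorelSpace E]

theorem toSphere_setOf_lt_inner (hE : Module.finrank ℝ E = 3) {α : E} (hα : ‖α‖ = 1) {c : ℝ}
    (hc : |c| ≤ 1) :
    (volume : Measure E).toSphere {l | c < ⟪α, (l : E)⟫} = ENNReal.ofReal (2 * π * (1 - c)) := by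
  rw [Measure.toSphere_apply' _ (measurableSet_lt measurable_const (by fun_prop)),
    Ioo_smul_coe_setOf_lt_inner, volume_setOf_norm_lt_one_mul_norm_lt_inner hE hα hc, hE,
    ← ENNReal.ofReal_natCast, ← ENNReal.ofReal_mul (by norm_num)]
  congr 1
  push_cast
  ring

end Sphere

/-- The Bell-Mermin model reproduces the Born rule: for Bloch vectors
`ψ, α` on `S²`, `∫_{S²} Θ(α·(ψ + λ₂)) (1/(4π)) dλ₂ = (1 + α·ψ)/2 = |⟨α|ψ⟩|²`. -/
theorem bellMermin_born_rule
    (ψ α : sphere (0 : EuclideanSpace ℝ (Fin 3)) 1) :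
    ∫ l : sphere (0 : EuclideanSpace ℝ (Fin 3)) 1,
        heaviside ⟪(α : EuclideanSpace ℝ (Fin 3)),
          (ψ : EuclideanSpace ℝ (Fin 3)) + (l : EuclideanSpace ℝ (Fin 3))⟫ *
          (1 / (4 * Real.pi))
        ∂((volume : Measure (EuclideanSpace ℝ (Fin 3))).toSphere)
      = (1 + ⟪(α : EuclideanSpace ℝ (Fin 3)), (ψ : EuclideanSpace ℝ (Fin 3))⟫) / 2 := by
  set c := ⟪(α : EuclideanSpace ℝ (Fin 3)), (ψ : EuclideanSpace ℝ (Fin 3))⟫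
  have hα : ‖(α : EuclideanSpace ℝ (Fin 3))‖ = 1 := norm_eq_of_mem_sphere α
  have hc : |-c| ≤ 1 := by
    simpa [abs_neg, hα, norm_eq_of_mem_sphere ψ] using
      abs_real_inner_le_norm (α : EuclideanSpace ℝ (Fin 3)) ψ
  have hcap : {l : sphere (0 : EuclideanSpace ℝ (Fin 3)) 1 |
      0 < ⟪(α : EuclideanSpace ℝ (Fin 3)), (ψ : EuclideanSpace ℝ (Fin 3)) + l⟫} =
      {l : sphere (0 : EuclideanSpace ℝ (Fin 3)) 1 | -c < ⟪(α : EuclideanSpace ℝ (Fin 3)), l⟫} := by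
    ext l
    simp [inner_add_right, c, neg_lt_iff_pos_add']
  rw [integral_mul_const, integral_heaviside_comp _ (by fun_prop), hcap, measureReal_def,
    toSphere_setOf_lt_inner finrank_euclideanSpace_fin hα hc,
    ENNReal.toReal_ofReal (by nlinarith [pi_pos, abs_le.mp hc])]
  field_simp
  ring
end

section
/- In a maximally ψ-epistemic ontological model reproducing the Born rule, if ψ and φ are nonorthogonal (|⟨φ|ψ⟩|² > 0), then Λ_ψ ∩ Λ_φ has positive measure with respect to μ_ψ; hence the model is ψ-epistemic. -/
open MeasureTheory Set

/- Maximal ψ-epistemicity says that `μ_ψ` puts mass `Q φ ψ` on `Λ_φ`. Since `μ_ψ` vanishes off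
`Λ_ψ`, all of that mass lies in `Λ_ψ ∩ Λ_φ`, so nonorthogonality makes the overlap charged, and a
set of positive integral cannot be `ν`-null. -/

section

variable {α : Type*} [MeasurableSpace α] {ν : Measure α}

theorem setIntegral_pos_inter_eq {f : α → ℝ} (hf : ∀ x, 0 ≤ f x) {t : Set α}
    (ht : MeasurableSet t) :
    ∫ x in {x | 0 < f x} ∩ t, f x ∂ν = ∫ x in t, f x ∂ν := by
  refine (setIntegral_eq_of_subset_of_forall_sdiff_eq_zero ht inter_subset_right ?_).symm
  intro x ⟨hxt, hx⟩
  exact le_antisymm (not_lt.mp fun hpos => hx ⟨hpos, hxt⟩) (hf x)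

theorem measure_pos_of_setIntegral_pos {f : α → ℝ} {s : Set α} (h : 0 < ∫ x in s, f x ∂ν) :
    0 < ν s :=
  pos_iff_ne_zero.2 fun hs => h.ne' (setIntegral_measure_zero f hs)

end

theorem maximally_epistemic_implies_epistemic_general
    {Λ State : Type*} [MeasurableSpace Λ] (ν : Measure Λ)
    (P : Set State)
    (μ : State → Λ → ℝ)
    (Q : State → State → ℝ)
    (hμnonneg : ∀ ψ ∈ P, ∀ l, 0 ≤ μ ψ l)
    (hμmeas : ∀ ψ ∈ P, Measurable (μ ψ))
    -- maximally ψ-epistemic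
    (hmax : ∀ ψ ∈ P, ∀ φ ∈ P, ∫ l in {l | 0 < μ φ l}, μ ψ l ∂ν = Q φ ψ)
    (ψ φ : State) (hψ : ψ ∈ P) (hφ : φ ∈ P)
    -- nonorthogonal
    (hnonorth : 0 < Q φ ψ) :
    0 < ∫ l in {l | 0 < μ ψ l ∧ 0 < μ φ l}, μ ψ l ∂ν ∧
    0 < ν {l | 0 < μ ψ l ∧ 0 < μ φ l} := by
  have hΛφ : MeasurableSet {l | 0 < μ φ l} := measurableSet_lt measurable_const (hμmeas φ hφ)
  have hoverlap : ∫ l in {l | 0 < μ ψ l ∧ 0 < μ φ l}, μ ψ l ∂ν = Q φ ψ :=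
    (setIntegral_pos_inter_eq (hμnonneg ψ hψ) hΛφ).trans (hmax ψ hψ φ hφ)
  have hpos := hoverlap ▸ hnonorth
  exact ⟨hpos, measure_pos_of_setIntegral_pos hpos⟩

/-- In a maximally ψ-epistemic ontological model reproducing the Born rule,
if `ψ, φ ∈ P` are distinct nonorthogonal states (`|⟨φ|ψ⟩|² > 0`), then `Λ_ψ ∩ Λ_φ` has
positive measure with respect to `μ_ψ` (and positive `ν`-measure); hence the model is
ψ-epistemic. -/
theorem maximally_epistemic_implies_epistemic
    {Λ State Basis : Type*} [MeasurableSpace Λ] (ν : Measure Λ)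
    (P : Set State) (Ms : Set Basis) (memB : State → Basis → Prop)
    (μ : State → Λ → ℝ) (ξ : Basis → State → Λ → ℝ)
    (Q : State → State → ℝ)
    (hμnonneg : ∀ ψ ∈ P, ∀ l, 0 ≤ μ ψ l)
    (hμprob : ∀ ψ ∈ P, ∫ l, μ ψ l ∂ν = 1)
    (hμmeas : ∀ ψ ∈ P, Measurable (μ ψ))
    (born : ∀ ψ ∈ P, ∀ M ∈ Ms, ∀ α, memB α M →
      ∫ l, ξ M α l * μ ψ l ∂ν = Q α ψ)
    -- maximally ψ-epistemic
    (hmax : ∀ ψ ∈ P, ∀ φ ∈ P, ∫ l in {l | 0 < μ φ l}, μ ψ l ∂ν = Q φ ψ)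
    (ψ φ : State) (hψ : ψ ∈ P) (hφ : φ ∈ P) (hne : ψ ≠ φ)
    -- nonorthogonal
    (hnonorth : 0 < Q φ ψ) :
    0 < ∫ l in {l | 0 < μ ψ l ∧ 0 < μ φ l}, μ ψ l ∂ν ∧
    0 < ν {l | 0 < μ ψ l ∧ 0 < μ φ l} :=
  maximally_epistemic_implies_epistemic_general ν P μ Q hμnonneg hμmeas hmax ψ φ hψ hφ hnonorth
end

section
/- For qubit states with Bloch vectors ψ, φ on S², the spherical integral ∫_{{λ : φ·λ > 0}} (1/π)(ψ·λ) Θ(ψ·λ) dλ equals (1 + cos θ)/2 where θ is the angle between ψ and φ; equivalently it equals cos²(θ/2). -/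
open MeasureTheory Metric
open scoped RealInnerProductSpace

/-!
The integrand `x ↦ π⁻¹ ⟪ψ, x⟫ Θ⟪ψ, x⟫ Θ⟪φ, x⟫` is positively homogeneous of degree one, so in
polar coordinates its integral over `S²` is `3 + 1 = 4` times its integral over the unit ball `B`.
On `B` write `t Θ t = (t + |t|) / 2`. The symmetry `x ↦ -x` of `B` halves both
`∫_B |⟪ψ, x⟫| Θ⟪φ, x⟫` and `∫_B ⟪φ, x⟫ Θ⟪φ, x⟫` relative to `A = ∫_B |⟪φ, x⟫|`, and the reflection
fixing `φ` kills the component of `ψ` orthogonal to `φ`; hence the ball integral is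
`(1 + ⟪ψ, φ⟫) A / (4π)`. Finally `A = π / 2`, by slicing `B` into discs orthogonal to `φ`.
-/

open Set Real

theorem measurable_heaviside : Measurable heaviside :=
  Measurable.ite measurableSet_Ioi measurable_const measurable_const

theorem norm_heaviside_le_one (t : ℝ) : ‖heaviside t‖ ≤ 1 := by
  unfold heaviside; split_ifs <;> norm_num

theorem heaviside_mul_of_pos {r : ℝ} (hr : 0 < r) (t : ℝ) : heaviside (r * t) = heaviside t := by
  simp only [heaviside, mul_pos_iff_of_pos_left hr]

theorem mul_heaviside_self (t : ℝ) : t * heaviside t = (t + |t|) / 2 := by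
  unfold heaviside
  split_ifs with h
  · rw [abs_of_pos h]; ring
  · rw [abs_of_nonpos (not_lt.mp h)]; ring

theorem heaviside_add_heaviside_neg {t : ℝ} (ht : t ≠ 0) : heaviside t + heaviside (-t) = 1 := by
  rcases ht.lt_or_gt with h | h <;> simp [heaviside, h, h.not_gt]

section Homogeneous

variable {E : Type*} [NormedAddCommGroup E] [NormedSpace ℝ E] [FiniteDimensional ℝ E]
  [MeasurableSpace E] [BorelSpace E] [Nontrivial E] (μ : Measure E) [μ.IsAddHaarMeasure]

theorem integral_volumeIoiPow_pow_mul_indicator_lt_one (n k : ℕ) :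
    ∫ r, (r : ℝ) ^ k * (if (r : ℝ) < 1 then 1 else 0) ∂(Measure.volumeIoiPow n)
      = 1 / (n + k + 1) := by
  rw [Measure.volumeIoiPow, integral_withDensity_eq_integral_toReal_smul
    (by fun_prop) (Filter.Eventually.of_forall fun _ => ENNReal.ofReal_lt_top),
    integral_subtype_comap measurableSet_Ioi
      (fun r : ℝ => (ENNReal.ofReal (r ^ n)).toReal • (r ^ k * if r < 1 then 1 else 0))]
  have h : EqOn (fun r : ℝ => (ENNReal.ofReal (r ^ n)).toReal • (r ^ k * if r < 1 then 1 else 0))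
      ((Iio 1).indicator fun r => r ^ (n + k)) (Ioi 0) := by
    intro r hr
    simp only [smul_eq_mul, indicator, mem_Iio, ENNReal.toReal_ofReal (pow_nonneg (le_of_lt hr) n)]
    split_ifs <;> ring
  rw [setIntegral_congr_fun measurableSet_Ioi h, integral_indicator measurableSet_Iio,
    Measure.restrict_restrict measurableSet_Iio, Iio_inter_Ioi, ← integral_Ioc_eq_integral_Ioo,
    ← intervalIntegral.integral_of_le zero_le_one, integral_pow]
  push_cast
  ring

/-- In polar coordinates `x = r • l` the ball integral factors as the sphere integral times
`∫₀¹ r ^ (dim E - 1) * r ^ k dr`. -/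
theorem integral_toSphere_eq_of_homogeneous {f : E → ℝ} {k : ℕ}
    (hf : ∀ (r : ℝ) (x : E), 0 < r → f (r • x) = r ^ k * f x) :
    ∫ l, f l ∂μ.toSphere = (Module.finrank ℝ E + k) * ∫ x in ball (0 : E) 1, f x ∂μ := by
  set n := Module.finrank ℝ E
  have hn : ((n - 1 : ℕ) : ℝ) + k + 1 = n + k := by
    rw [Nat.cast_pred Module.finrank_pos]; ring
  have hnk : (n : ℝ) + k ≠ 0 := by have : 0 < n := Module.finrank_pos; positivity
  let F : sphere (0 : E) 1 × Ioi (0 : ℝ) → ℝ :=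
    fun p => f p.1 * ((p.2 : ℝ) ^ k * if (p.2 : ℝ) < 1 then 1 else 0)
  have hpolar : ∫ x in ball (0 : E) 1, f x ∂μ
      = ∫ p, F p ∂(μ.toSphere.prod (.volumeIoiPow (n - 1))) := by
    have hpunct : ∫ x in ball (0 : E) 1, f x ∂μ
        = ∫ x : ({0}ᶜ : Set E), (ball 0 1).indicator f x ∂(μ.comap Subtype.val) := by
      rw [integral_subtype_comap (measurableSet_singleton 0).compl,
        MeasureTheory.restrict_compl_singleton, integral_indicator measurableSet_ball]
    rw [hpunct, ← (μ.measurePreserving_homeomorphUnitSphereProd).integral_comp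
        (Homeomorph.measurableEmbedding _) F]
    refine integral_congr_ae (Filter.Eventually.of_forall fun x => ?_)
    have hx : 0 < ‖(x : E)‖ := norm_pos_iff.mpr x.2
    have hfx : f x = ‖(x : E)‖ ^ k * f (‖(x : E)‖⁻¹ • (x : E)) := by
      rw [← hf _ _ hx, smul_inv_smul₀ hx.ne']
    simp only [F, indicator, mem_ball, dist_zero_right, hfx,
      homeomorphUnitSphereProd_apply_fst_coe, homeomorphUnitSphereProd_apply_snd_coe]
    split_ifs <;> ring
  rw [hpolar, integral_prod_mul (fun l : sphere (0 : E) 1 => f l)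
    (fun r : Ioi (0 : ℝ) => (r : ℝ) ^ k * if (r : ℝ) < 1 then 1 else 0),
    integral_volumeIoiPow_pow_mul_indicator_lt_one, hn]
  field_simp

end Homogeneous

section Ball

variable {E : Type*} [NormedAddCommGroup E] [InnerProductSpace ℝ E] [FiniteDimensional ℝ E]
  [MeasurableSpace E] [BorelSpace E]

theorem integral_ball_comp_linearIsometryEquiv (e : E ≃ₗᵢ[ℝ] E) (f : E → ℝ) :
    ∫ x in ball (0 : E) 1, f (e x) = ∫ x in ball (0 : E) 1, f x := by
  rw [← e.measurePreserving.setIntegral_preimage_emb e.toHomeomorph.measurableEmbedding f,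
    e.preimage_ball, map_zero]

theorem integral_ball_eq_half_of_add_comp_neg {f g : E → ℝ} (hf : IntegrableOn f (ball 0 1))
    (hfg : ∀ᵐ x, f x + f (-x) = g x) :
    ∫ x in ball (0 : E) 1, f x = (∫ x in ball (0 : E) 1, g x) / 2 := by
  let e : E ≃ₗᵢ[ℝ] E := .neg ℝ
  have hneg : ∫ x in ball (0 : E) 1, f (-x) = ∫ x in ball (0 : E) 1, f x :=
    integral_ball_comp_linearIsometryEquiv e f
  have hf_neg : IntegrableOn (fun x => f (-x)) (ball (0 : E) 1) := by
    have := (e.measurePreserving.integrableOn_comp_preimage e.toHomeomorph.measurableEmbedding).2 hf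
    rwa [e.preimage_ball, map_zero] at this
  rw [← setIntegral_congr_ae measurableSet_ball (hfg.mono fun x hx _ => hx),
    integral_add hf hf_neg, hneg]
  ring

theorem integrableOn_ball_mul_heaviside {f : E → ℝ} (hf : Continuous f) (v : E) :
    IntegrableOn (fun x => f x * heaviside ⟪v, x⟫) (ball (0 : E) 1) :=
  ((hf.continuousOn.integrableOn_compact (isCompact_closedBall 0 1)).mono_set
    ball_subset_closedBall).mul_bdd
    ((measurable_heaviside.comp (measurable_const.inner measurable_id)).aestronglyMeasurable)
    (Filter.Eventually.of_forall fun _ => norm_heaviside_le_one _)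

theorem integral_ball_abs_inner_eq_of_norm_eq {u v : E} (h : ‖u‖ = ‖v‖) :
    ∫ x in ball (0 : E) 1, |⟪u, x⟫| = ∫ x in ball (0 : E) 1, |⟪v, x⟫| := by
  set e := Submodule.reflection (ℝ ∙ (u - v))ᗮ
  have heu : e u = v := Submodule.reflection_sub h
  rw [← integral_ball_comp_linearIsometryEquiv e (fun x => |⟪v, x⟫|)]
  simp only [← heu, e.inner_map_map]

theorem volume_setOf_inner_eq_zero {v : E} (hv : v ≠ 0) : volume {x : E | ⟪v, x⟫ = 0} = 0 := by
  refine Measure.addHaar_submodule volume (LinearMap.ker (innerₛₗ ℝ v)) fun htop => hv ?_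
  have hv_mem : v ∈ LinearMap.ker (innerₛₗ ℝ v) := htop ▸ Submodule.mem_top
  simpa using hv_mem

theorem integral_ball_inner_mul_heaviside_self (v : E) :
    ∫ x in ball (0 : E) 1, ⟪v, x⟫ * heaviside ⟪v, x⟫ = (∫ x in ball (0 : E) 1, |⟪v, x⟫|) / 2 := by
  refine integral_ball_eq_half_of_add_comp_neg (integrableOn_ball_mul_heaviside (by fun_prop) v)
    (Filter.Eventually.of_forall fun x => ?_)
  simp only [inner_neg_right, mul_heaviside_self, abs_neg]
  ring

theorem integral_ball_abs_inner_mul_heaviside (u : E) {v : E} (hv : v ≠ 0) :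
    ∫ x in ball (0 : E) 1, |⟪u, x⟫| * heaviside ⟪v, x⟫ = (∫ x in ball (0 : E) 1, |⟪u, x⟫|) / 2 := by
  refine integral_ball_eq_half_of_add_comp_neg (integrableOn_ball_mul_heaviside (by fun_prop) v) ?_
  -- `Θ 0 = 0`, so `Θ s + Θ (-s) = 1` fails on the hyperplane `⟪v, x⟫ = 0`, which is null.
  filter_upwards [measure_eq_zero_iff_ae_notMem.1 (volume_setOf_inner_eq_zero hv)] with x hx
  rw [inner_neg_right, inner_neg_right, abs_neg, ← mul_add, heaviside_add_heaviside_neg hx, mul_one]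

theorem integral_ball_inner_mul_heaviside_of_inner_eq_zero {v w : E} (h : ⟪v, w⟫ = 0) :
    ∫ x in ball (0 : E) 1, ⟪w, x⟫ * heaviside ⟪v, x⟫ = 0 := by
  set e := Submodule.reflection (ℝ ∙ v)
  have hev : e v = v :=
    Submodule.reflection_mem_subspace_eq_self (Submodule.mem_span_singleton_self v)
  have hew : e w = -w := Submodule.reflection_mem_subspace_orthogonalComplement_eq_neg
    (Submodule.mem_orthogonal_singleton_iff_inner_right.mpr h)
  have hodd : ∀ x, ⟪w, e x⟫ * heaviside ⟪v, e x⟫ = -(⟪w, x⟫ * heaviside ⟪v, x⟫) := fun x => by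
    rw [← e.inner_map_map w, ← e.inner_map_map v, Submodule.reflection_reflection, hev, hew,
      inner_neg_left, neg_mul]
  have := integral_ball_comp_linearIsometryEquiv e (fun x => ⟪w, x⟫ * heaviside ⟪v, x⟫)
  simp only [hodd, integral_neg] at this
  linarith

theorem integral_ball_inner_mul_heaviside (u : E) {v : E} (hv : ‖v‖ = 1) :
    ∫ x in ball (0 : E) 1, ⟪u, x⟫ * heaviside ⟪v, x⟫
      = ⟪u, v⟫ * (∫ x in ball (0 : E) 1, |⟪v, x⟫|) / 2 := by
  set w := u - ⟪u, v⟫ • v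
  have hvw : ⟪v, w⟫ = 0 := by
    rw [inner_sub_right, real_inner_smul_right, real_inner_self_eq_norm_sq, hv, real_inner_comm]
    ring
  have hsplit : ∀ x, ⟪u, x⟫ * heaviside ⟪v, x⟫
      = ⟪u, v⟫ * (⟪v, x⟫ * heaviside ⟪v, x⟫) + ⟪w, x⟫ * heaviside ⟪v, x⟫ := fun x => by
    rw [inner_sub_left, real_inner_smul_left]
    ring
  simp only [hsplit]
  rw [integral_add ((integrableOn_ball_mul_heaviside (by fun_prop) v).const_mul _)
      (integrableOn_ball_mul_heaviside (by fun_prop) v), integral_const_mul,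
    integral_ball_inner_mul_heaviside_self, integral_ball_inner_mul_heaviside_of_inner_eq_zero hvw]
  ring

theorem integral_ball_inner_mul_heaviside_mul_heaviside {u v : E} (hu : ‖u‖ = 1) (hv : ‖v‖ = 1) :
    ∫ x in ball (0 : E) 1, ⟪u, x⟫ * heaviside ⟪u, x⟫ * heaviside ⟪v, x⟫
      = (1 + ⟪u, v⟫) * (∫ x in ball (0 : E) 1, |⟪v, x⟫|) / 4 := by
  have hv0 : v ≠ 0 := norm_ne_zero_iff.mp (hv ▸ one_ne_zero)
  have hsplit : ∀ x, ⟪u, x⟫ * heaviside ⟪u, x⟫ * heaviside ⟪v, x⟫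
      = (⟪u, x⟫ * heaviside ⟪v, x⟫ + |⟪u, x⟫| * heaviside ⟪v, x⟫) / 2 := fun x => by
    rw [mul_heaviside_self]
    ring
  simp only [hsplit]
  rw [integral_div, integral_add (integrableOn_ball_mul_heaviside (by fun_prop) v)
      (integrableOn_ball_mul_heaviside (by fun_prop) v),
    integral_ball_inner_mul_heaviside u hv, integral_ball_abs_inner_mul_heaviside u hv0,
    integral_ball_abs_inner_eq_of_norm_eq (hu.trans hv.symm)]
  ring

end Ball

theorem volume_setOf_sum_sq_lt (c : ℝ) :
    volume {y : Fin 2 → ℝ | ∑ i, y i ^ 2 < c} = ENNReal.ofReal (π * c) := by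
  have hdisk : {y : Fin 2 → ℝ | ∑ i, y i ^ 2 < c} = WithLp.toLp 2 ⁻¹' ball 0 √c := by
    ext y
    rw [mem_preimage, mem_ball_zero_iff, lt_sqrt (norm_nonneg _), EuclideanSpace.real_norm_sq_eq]
    rfl
  rw [hdisk, (PiLp.volume_preserving_toLp (Fin 2)).measure_preimage
    measurableSet_ball.nullMeasurableSet, EuclideanSpace.volume_ball_fin_two]
  rcases le_or_gt c 0 with hc | hc
  · rw [sqrt_eq_zero'.mpr hc,
      ENNReal.ofReal_eq_zero.mpr (mul_nonpos_of_nonneg_of_nonpos pi_nonneg hc)]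
    simp
  · rw [← ENNReal.ofReal_pow (sqrt_nonneg c), sq_sqrt hc.le, ← ENNReal.ofReal_mul hc.le, mul_comm]

theorem integral_abs_mul_max_pi_mul_one_sub_sq :
    ∫ t, |t| * max (π * (1 - t ^ 2)) 0 = π / 2 := by
  have habs := integral_comp_abs (f := fun s => s * max (π * (1 - s ^ 2)) 0)
  simp only [sq_abs] at habs
  rw [habs, setIntegral_eq_of_subset_of_forall_sdiff_eq_zero measurableSet_Ioi Ioc_subset_Ioi_self
    (fun t ht => ?_), ← intervalIntegral.integral_of_le zero_le_one,
    intervalIntegral.integral_congr (g := fun t => π * t - π * t ^ 3) (fun t ht => ?_)]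
  · rw [intervalIntegral.integral_sub ((continuous_const_mul π).intervalIntegrable _ _)
      ((by fun_prop : Continuous fun t : ℝ => π * t ^ 3).intervalIntegrable _ _),
      intervalIntegral.integral_const_mul, intervalIntegral.integral_const_mul, integral_id,
      integral_pow]
    ring
  · rw [uIcc_of_le zero_le_one] at ht
    have : 0 ≤ π * (1 - t ^ 2) := mul_nonneg pi_nonneg (by nlinarith [ht.1, ht.2])
    rw [max_eq_left this]
    ring
  · have ht1 : 1 < t := by simpa using ht
    have : π * (1 - t ^ 2) ≤ 0 := mul_nonpos_of_nonneg_of_nonpos pi_nonneg (by nlinarith)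
    rw [max_eq_right this, mul_zero]

/-- The slice of the ball at `x 0 = t` is a disc of area `π (1 - t ^ 2)`. -/
theorem integral_ball_abs_coord_zero :
    ∫ x in ball (0 : EuclideanSpace ℝ (Fin 3)) 1, |x 0| = π / 2 := by
  let e : ℝ × (Fin 2 → ℝ) ≃ᵐ EuclideanSpace ℝ (Fin 3) :=
    (MeasurableEquiv.piFinSuccAbove (fun _ => ℝ) 0).symm.trans (MeasurableEquiv.toLp 2 _)
  have he : MeasurePreserving e :=
    (PiLp.volume_preserving_toLp (Fin 3)).comp (volume_preserving_piFinSuccAbove _ 0).symm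
  have he_apply (p : ℝ × (Fin 2 → ℝ)) : e p = WithLp.toLp 2 (Fin.cons p.1 p.2) := by
    simp [e, Fin.consEquiv]
  have hmem (t : ℝ) (y : Fin 2 → ℝ) : e (t, y) ∈ ball 0 1 ↔ ∑ i, y i ^ 2 < 1 - t ^ 2 := by
    rw [mem_ball_zero_iff, ← sq_lt_one_iff₀ (norm_nonneg _), EuclideanSpace.real_norm_sq_eq,
      Fin.sum_univ_succ, he_apply]
    simp only [Fin.cons_zero, Fin.cons_succ]
    constructor <;> intro h <;> linarith
  have hball : IntegrableOn (fun x : EuclideanSpace ℝ (Fin 3) => |x 0|) (ball 0 1) :=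
    ((by fun_prop : Continuous fun x : EuclideanSpace ℝ (Fin 3) => |x 0|).continuousOn
      |>.integrableOn_compact (isCompact_closedBall 0 1)).mono_set ball_subset_closedBall
  have hint : Integrable ((e ⁻¹' ball 0 1).indicator fun p => |(e p) 0|) (volume.prod volume) := by
    rw [integrable_indicator_iff (measurableSet_ball.preimage e.measurable),
      ← Measure.volume_eq_prod]
    exact (he.integrableOn_comp_preimage e.measurableEmbedding).2 hball
  rw [← he.setIntegral_preimage_emb e.measurableEmbedding,
    ← integral_indicator (measurableSet_ball.preimage e.measurable), Measure.volume_eq_prod,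
    integral_prod _ hint]
  have hslice (t : ℝ) : ∫ y, (e ⁻¹' ball 0 1).indicator (fun p => |(e p) 0|) (t, y)
      = |t| * max (π * (1 - t ^ 2)) 0 := by
    set D : Set (Fin 2 → ℝ) := {y | ∑ i, y i ^ 2 < 1 - t ^ 2}
    have hind : (fun y => (e ⁻¹' ball 0 1).indicator (fun p => |(e p) 0|) (t, y))
        = D.indicator (fun _ => |t|) := by
      ext y
      by_cases h : y ∈ D
      · rw [indicator_of_mem (s := e ⁻¹' ball 0 1) ((hmem t y).2 h), indicator_of_mem h,
          he_apply]
        rfl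
      · rw [indicator_of_notMem (s := e ⁻¹' ball 0 1) (mt (hmem t y).1 h), indicator_of_notMem h]
    rw [hind, integral_indicator_const _ (measurableSet_lt (by fun_prop) measurable_const),
      measureReal_def, volume_setOf_sum_sq_lt, ENNReal.toReal_ofReal', smul_eq_mul, mul_comm]
  exact (integral_congr_ae (Filter.Eventually.of_forall hslice)).trans
    integral_abs_mul_max_pi_mul_one_sub_sq

theorem integral_ball_abs_inner_of_norm_eq_one {u : EuclideanSpace ℝ (Fin 3)} (hu : ‖u‖ = 1) :
    ∫ x in ball (0 : EuclideanSpace ℝ (Fin 3)) 1, |⟪u, x⟫| = π / 2 := by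
  rw [integral_ball_abs_inner_eq_of_norm_eq (v := EuclideanSpace.single 0 1) (by simp [hu])]
  simpa [EuclideanSpace.inner_single_left] using integral_ball_abs_coord_zero

theorem kochenSpecker_overlap_integral_general
    (ψ φ : sphere (0 : EuclideanSpace ℝ (Fin 3)) 1)
    (θ : ℝ)
    (hcos : Real.cos θ = ⟪(ψ : EuclideanSpace ℝ (Fin 3)), (φ : EuclideanSpace ℝ (Fin 3))⟫) :
    (∫ l in {l : sphere (0 : EuclideanSpace ℝ (Fin 3)) 1 |
        0 < ⟪(φ : EuclideanSpace ℝ (Fin 3)), (l : EuclideanSpace ℝ (Fin 3))⟫},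
        (1 / Real.pi) * ⟪(ψ : EuclideanSpace ℝ (Fin 3)), (l : EuclideanSpace ℝ (Fin 3))⟫ *
          heaviside ⟪(ψ : EuclideanSpace ℝ (Fin 3)), (l : EuclideanSpace ℝ (Fin 3))⟫
        ∂((volume : Measure (EuclideanSpace ℝ (Fin 3))).toSphere)
      = (1 + Real.cos θ) / 2) ∧
    (1 + Real.cos θ) / 2 = Real.cos (θ / 2) ^ 2 := by
  let f : EuclideanSpace ℝ (Fin 3) → ℝ := fun x => 1 / π * (⟪(ψ : EuclideanSpace ℝ (Fin 3)), x⟫ *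
    heaviside ⟪(ψ : EuclideanSpace ℝ (Fin 3)), x⟫ * heaviside ⟪(φ : EuclideanSpace ℝ (Fin 3)), x⟫)
  have hf : ∀ (r : ℝ) x, 0 < r → f (r • x) = r ^ 1 * f x := fun r x hr => by
    simp only [f, inner_smul_right, heaviside_mul_of_pos hr]
    ring
  have hhemisphere : MeasurableSet {l : sphere (0 : EuclideanSpace ℝ (Fin 3)) 1 |
      0 < ⟪(φ : EuclideanSpace ℝ (Fin 3)), (l : EuclideanSpace ℝ (Fin 3))⟫} :=
    (isOpen_lt continuous_const (by fun_prop)).measurableSet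
  refine ⟨?_, ?_⟩
  · calc _ = ∫ l, f l ∂(volume : Measure (EuclideanSpace ℝ (Fin 3))).toSphere := by
          rw [← integral_indicator hhemisphere]
          congr with l
          by_cases hl : 0 < ⟪(φ : EuclideanSpace ℝ (Fin 3)), (l : EuclideanSpace ℝ (Fin 3))⟫ <;>
            simp [f, hl, heaviside]
      _ = 4 * ∫ x in ball 0 1, f x := by
          rw [integral_toSphere_eq_of_homogeneous _ hf, finrank_euclideanSpace_fin]
          norm_num
      _ = (1 + cos θ) / 2 := by
          rw [integral_const_mul, integral_ball_inner_mul_heaviside_mul_heaviside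
            (norm_eq_of_mem_sphere ψ) (norm_eq_of_mem_sphere φ),
            integral_ball_abs_inner_of_norm_eq_one (norm_eq_of_mem_sphere φ), hcos]
          field_simp
  · rw [cos_sq, two_mul, add_halves]
    ring

/-- For qubit states with Bloch vectors `ψ, φ` on `S²` at angle `θ ∈ [0, π]`
(`cos θ = ψ·φ`), the spherical integral `∫_{φ·λ > 0} (1/π)(ψ·λ) Θ(ψ·λ) dλ` equals
`(1 + cos θ)/2`, which equals `cos²(θ/2) = |⟨φ|ψ⟩|²`. -/
theorem kochenSpecker_overlap_integral
    (ψ φ : sphere (0 : EuclideanSpace ℝ (Fin 3)) 1)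
    (θ : ℝ) (hθ0 : 0 ≤ θ) (hθπ : θ ≤ Real.pi)
    (hcos : Real.cos θ = ⟪(ψ : EuclideanSpace ℝ (Fin 3)), (φ : EuclideanSpace ℝ (Fin 3))⟫) :
    (∫ l in {l : sphere (0 : EuclideanSpace ℝ (Fin 3)) 1 |
        0 < ⟪(φ : EuclideanSpace ℝ (Fin 3)), (l : EuclideanSpace ℝ (Fin 3))⟫},
        (1 / Real.pi) * ⟪(ψ : EuclideanSpace ℝ (Fin 3)), (l : EuclideanSpace ℝ (Fin 3))⟫ *
          heaviside ⟪(ψ : EuclideanSpace ℝ (Fin 3)), (l : EuclideanSpace ℝ (Fin 3))⟫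
        ∂((volume : Measure (EuclideanSpace ℝ (Fin 3))).toSphere)
      = (1 + Real.cos θ) / 2) ∧
    (1 + Real.cos θ) / 2 = Real.cos (θ / 2) ^ 2 :=
  kochenSpecker_overlap_integral_general ψ φ θ hcos
end
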